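/- Let f, g ∈ ℚ[u,v] be polynomials such that u³ − 27v² divides 3u²g + 54vf in ℚ[u,v]. Then the pair (f, g) is a ℚ[u,v]-linear combination of the pairs (−3v, 2u) and (3u², −54v); that is, there exist a, b ∈ ℚ[u,v] with f = −3v·a + 3u²·b and g = 2u·a − 54v·b. -/

import Mathlib

open MvPolynomial

noncomputable def u : MvPolynomial (Fin 2) ℚ := X 0
noncomputable def v : MvPolynomial (Fin 2) ℚ := X 1

/-!
Write `3x²g + 54yf = (x³ − 27y²)·6a`. Rearranged, this says `3x²(2xa − g) = 54y(f + 3ya)`.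
Since `x` is prime and does not divide `54y`, `x²` divides `f + 3ya`, say `f + 3ya = 3x²b`;
cancelling `3x²` then gives `g = 2xa − 54yb`.
-/

theorem exists_eq_combination_of_dvd {R : Type*} [CommRing R] [IsDomain R] {x y w : R}
    (hx : Prime x) (hxy : ¬x ∣ y) (hw : 6 * w = 1) {f g : R}
    (h : x ^ 3 - 27 * y ^ 2 ∣ 3 * x ^ 2 * g + 54 * y * f) :
    ∃ a b : R, f = -3 * y * a + 3 * x ^ 2 * b ∧ g = 2 * x * a - 54 * y * b := by
  obtain ⟨q, hq⟩ := h
  have key : x ^ 2 * (3 * (2 * x * (w * q) - g)) = 54 * y * (f + 3 * y * (w * q)) := by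
    linear_combination (x ^ 3 - 27 * y ^ 2) * q * hw - hq
  have hx54 : ¬x ∣ 54 * y := fun hd ↦ hxy <| by
    rw [show y = 4 * w ^ 3 * (54 * y) by linear_combination -y * (36 * w ^ 2 + 6 * w + 1) * hw]
    exact hd.mul_left _
  obtain ⟨c, hc⟩ := hx.pow_dvd_of_dvd_mul_left 2 hx54 ⟨_, key.symm⟩
  have hg : 3 * (2 * x * (w * q) - g) = 54 * y * c :=
    mul_left_cancel₀ (pow_ne_zero 2 hx.ne_zero) (by rw [key, hc]; ring)
  refine ⟨w * q, 2 * w * c, ?_, ?_⟩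
  · linear_combination hc - x ^ 2 * c * hw
  · linear_combination (-2 * w) * hg + (2 * x * w * q - g) * hw

/-- If `u³ − 27v²` divides `3u²g + 54vf` in `ℚ[u,v]`, then `(f, g)` is a
`ℚ[u,v]`-linear combination of `(−3v, 2u)` and `(3u², −54v)`. -/
theorem stmt_0 (f g : MvPolynomial (Fin 2) ℚ)
    (h : (u ^ 3 - 27 * v ^ 2) ∣ (3 * u ^ 2 * g + 54 * v * f)) :
    ∃ a b : MvPolynomial (Fin 2) ℚ,
      f = -3 * v * a + 3 * u ^ 2 * b ∧ g = 2 * u * a - 54 * v * b := by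
  have hu : Prime u := X_prime
  have huv : ¬u ∣ v := by simp [u, v, X_dvd_X]
  have hw : 6 * C (6⁻¹ : ℚ) = (1 : MvPolynomial (Fin 2) ℚ) := by
    rw [← map_ofNat C, ← C_mul]; norm_num
  exact exists_eq_combination_of_dvd hu huv hw h
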